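/- arXiv:2604.18304 — 11 statements merged into one kernel-verified Lean document; each statement's English description precedes it below -/
import Mathlib

section
/- Let S be a commutative monoid (with the algebraic preorder x ≤ y iff ∃z, y = x + z) satisfying: (a) Schröder–Bernstein: x ≤ y and y ≤ x imply x = y; and (b) n-cancellation: nx = ny implies x = y for all n ≥ 1. If (n+1)e ≤ ne for some n ≥ 1 and e ∈ S, then 2e = e. In particular S has plain paradoxes. -/
/-- The algebraic preorder on a commutative monoid. -/
def ALE {M : Type*} [AddCommMonoid M] (x y : M) : Prop := ∃ z, y = x + z

/-- If a commutative monoid satisfies Schröder–Bernstein and n-cancellation,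
and `(n+1)e ≤ ne` for some `n ≥ 1`, then `2e = e` (so the monoid has plain paradoxes). -/
theorem stmt_2 {M : Type*} [AddCommMonoid M]
    (hSB : ∀ x y : M, ALE x y → ALE y x → x = y)
    (hcan : ∀ (n : ℕ) (x y : M), 1 ≤ n → n • x = n • y → x = y)
    (e : M) (n : ℕ) (hn : 1 ≤ n) (h : ALE ((n + 1) • e) (n • e)) :
    2 • e = e ∧ ALE (2 • e) e := by
  obtain ⟨z, hz⟩ := h
  have hz' : n • e = n • e + (e + z) := by
    conv_lhs => rw [hz]
    rw [add_smul, one_smul, add_assoc]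
  have key : ∀ k : ℕ, n • e = n • e + k • (e + z) := by
    intro k
    induction k with
    | zero => simp
    | succ k ih =>
      calc n • e = n • e + (e + z) := hz'
        _ = (n • e + k • (e + z)) + (e + z) := by rw [← ih]
        _ = n • e + (k + 1) • (e + z) := by rw [add_assoc, ← succ_nsmul]
  have hne : n • e = n • (2 • e + z) := by
    calc n • e = n • e + n • (e + z) := key n
      _ = n • (e + (e + z)) := (smul_add n e (e + z)).symm
      _ = n • (2 • e + z) := by rw [two_smul, ← add_assoc]
  have he : e = 2 • e + z := hcan n _ _ hn hne
  have hle : ALE (2 • e) e := ⟨z, he⟩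
  have hge : ALE e (2 • e) := ⟨e, by rw [two_smul]⟩
  exact ⟨hSB _ _ hle hge, hle⟩
end

section
/- Let M be a simple conical commutative monoid with plain paradoxes. Then M is either stably finite (a + b = a implies b = 0) or purely infinite (2a ≤ a for every a ∈ M). -/
/-- A simple conical commutative monoid with plain paradoxes is either stably
finite or purely infinite. -/
theorem stmt_4 {M : Type*} [AddCommMonoid M]
    (hconical : ∀ x y : M, x + y = 0 → x = 0 ∧ y = 0)
    (hsimple : ∀ a c : M, a ≠ 0 → c ≠ 0 → ∃ n : ℕ, 1 ≤ n ∧ ALE a (n • c))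
    (hpp : ∀ (x : M) (n : ℕ), 1 ≤ n → ALE ((n + 1) • x) (n • x) → ALE (2 • x) x) :
    (∀ a b : M, a + b = a → b = 0) ∨ (∀ a : M, ALE (2 • a) a) := by
  by_cases hsf : ∀ a b : M, a + b = a → b = 0
  · exact Or.inl hsf
  · right
    push_neg at hsf
    obtain ⟨a₀, b, hab, hb⟩ := hsf
    have ha₀ : a₀ ≠ 0 := by
      rintro rfl
      exact hb (by simpa using hab)
    -- 2 • b ≤ b
    have h2b : ALE (2 • b) b := by
      obtain ⟨m, hm, z, hz⟩ := hsimple a₀ b ha₀ hb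
      refine hpp b m hm ⟨0, ?_⟩
      have : (m + 1) • b = m • b := by
        rw [succ_nsmul, hz, add_right_comm, hab]
      rw [this, add_zero]
    -- b + c = b with c ≠ 0
    obtain ⟨w, hw⟩ := h2b
    have hbc : b + (b + w) = b := by
      rw [← add_assoc, ← two_nsmul, ← hw]
    have hc : b + w ≠ 0 := by
      intro h
      exact hb (hconical b w h).1
    intro a
    by_cases ha : a = 0
    · exact ⟨0, by simp [ha]⟩
    · -- a ≤ p • (b + w), and b + p • (b+w) = b, so a + b ≤ b
      obtain ⟨p, hp, z', hz'⟩ := hsimple a (b + w) ha hc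
      have hbp : ∀ k : ℕ, b + k • (b + w) = b := by
        intro k
        induction k with
        | zero => simp
        | succ n ih =>
            rw [succ_nsmul, ← add_assoc, add_right_comm b (n • (b + w)) (b + w),
              hbc, ih]
      have habb : ∃ w', b = (a + b) + w' := by
        refine ⟨z', ?_⟩
        have := hbp p
        rw [hz'] at this
        calc b = b + (a + z') := this.symm
        _ = (a + b) + z' := by abel
      obtain ⟨w', hw'⟩ := habb
      obtain ⟨q, hq, z, hzq⟩ := hsimple b a hb ha
      refine hpp a q hq ⟨w', ?_⟩
      rw [succ_nsmul, hzq]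
      conv_lhs => rw [hw']
      abel
end

section
/- Let M be a simple conical commutative monoid that is either stably finite or purely infinite. Then M has plain paradoxes. -/
/-- A simple conical commutative monoid that is stably finite or purely infinite
has plain paradoxes. -/
theorem stmt_5 {M : Type*} [AddCommMonoid M]
    (hconical : ∀ x y : M, x + y = 0 → x = 0 ∧ y = 0)
    (hsimple : ∀ a c : M, a ≠ 0 → c ≠ 0 → ∃ n : ℕ, 1 ≤ n ∧ ALE a (n • c))
    (hdich : (∀ a b : M, a + b = a → b = 0) ∨ (∀ a : M, ALE (2 • a) a)) :
    ∀ (x : M) (n : ℕ), 1 ≤ n → ALE ((n + 1) • x) (n • x) → ALE (2 • x) x := by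
  intro x n hn hle
  rcases hdich with hsf | hpi
  · obtain ⟨z, hz⟩ := hle
    have h : n • x + (x + z) = n • x := by
      rw [← add_assoc, ← succ_nsmul]
      exact hz.symm
    have hxz : x + z = 0 := hsf _ _ h
    have hx : x = 0 := (hconical _ _ hxz).1
    exact ⟨0, by simp [hx]⟩
  · exact hpi x
end

section
/- Let S be a commutative monoid containing a directly finite element a that is (m,n)-paradoxical for integers 1 < m < n. Then S does not have plain paradoxes; specifically, (m+1)a ≤ ma but 2a ≰ a. -/
/-- If a commutative monoid contains a directly finite element `a` that is
`(m,n)`-paradoxical for `1 < m < n`, then `(m+1)a ≤ ma` but `2a ≰ a`; in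
particular the monoid does not have plain paradoxes. -/
theorem stmt_6 {M : Type*} [AddCommMonoid M] (a : M) (m n : ℕ)
    (hm : 1 < m) (hmn : m < n)
    (hdf : ∀ b : M, a + b = a → b = 0)
    (hpar : ∀ k l : ℕ, m ≤ k → m ≤ l → (k • a = l • a ↔ k ≡ l [MOD n - m]))
    (hinj : Set.InjOn (fun k : ℕ => k • a) (Set.Iio n)) :
    ALE ((m + 1) • a) (m • a) ∧ ¬ ALE (2 • a) a ∧
      ¬ (∀ (x : M) (k : ℕ), 1 ≤ k → ALE ((k + 1) • x) (k • x) → ALE (2 • x) x) := by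
  have hmn' : m ≡ n [MOD n - m] := (Nat.modEq_iff_dvd' hmn.le).mpr dvd_rfl
  have hmna : m • a = n • a := (hpar m n le_rfl hmn.le).mpr hmn'
  have h1 : ALE ((m + 1) • a) (m • a) := by
    refine ⟨(n - m - 1) • a, ?_⟩
    rw [← add_nsmul]
    have : m + 1 + (n - m - 1) = n := by omega
    rw [this, hmna]
  have h2 : ¬ ALE (2 • a) a := by
    rintro ⟨z, hz⟩
    have haz : a + z = 0 := by
      apply hdf
      rw [← add_assoc, ← two_nsmul, ← hz]
    -- then 0 • a = (n-m) • a, contradicting injectivity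
    have hmz : m • a + m • z = 0 := by
      rw [← smul_add, haz, smul_zero]
    have key : (0 : ℕ) • a = (n - m) • a := by
      have h3 : (n - m) • a + (m • a + m • z) = (n - m) • a := by
        rw [hmz, add_zero]
      have h4 : (n - m) • a + m • a = n • a := by
        rw [← add_nsmul]; congr 1; omega
      calc (0:ℕ) • a = 0 := zero_nsmul a
        _ = m • a + m • z := hmz.symm
        _ = n • a + m • z := by rw [hmna]
        _ = (n - m) • a + m • a + m • z := by rw [h4]
        _ = (n - m) • a + (m • a + m • z) := by rw [add_assoc]
        _ = (n - m) • a := h3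
    have h0 : (0 : ℕ) ∈ Set.Iio n := by simp; omega
    have hnm : n - m ∈ Set.Iio n := by simp; omega
    have := hinj h0 hnm key
    omega
  refine ⟨h1, h2, ?_⟩
  intro h
  exact h2 (h a m hm.le h1)
end

section
/- Every commutative monoid satisfying almost unperforation ((n+1)x ≤ ny implies x ≤ y for all n ≥ 1) has plain paradoxes. -/
/-- Every almost unperforated commutative monoid has plain paradoxes. -/
theorem stmt_7 {M : Type*} [AddCommMonoid M]
    (hau : ∀ (n : ℕ) (x y : M), 1 ≤ n → ALE ((n + 1) • x) (n • y) → ALE x y) :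
    ∀ (x : M) (n : ℕ), 1 ≤ n → ALE ((n + 1) • x) (n • x) → ALE (2 • x) x := by
  intro x n hn h
  have key : ∀ k : ℕ, ALE ((n + 1 + k) • x) (n • x) := by
    intro k
    induction k with
    | zero => simpa using h
    | succ k ih =>
      obtain ⟨z, hz⟩ := ih
      obtain ⟨w, hw⟩ := h
      refine ⟨z + w, ?_⟩
      calc n • x = (n + 1) • x + w := hw
        _ = n • x + x + w := by rw [add_nsmul, one_nsmul]
        _ = ((n + 1 + k) • x + z) + x + w := by rw [hz]
        _ = (n + 1 + (k + 1)) • x + (z + w) := by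
            simp [add_nsmul]
            abel
  have h2 := key (n + 1)
  apply hau n (2 • x) x hn
  have : (n + 1) • (2 • x) = (n + 1 + (n + 1)) • x := by
    rw [smul_smul, mul_two]
  rwa [this]
end

section
/- A commutative monoid M is separative (2x = x + y = 2y implies x = y) if and only if whenever x + z = y + z and z ≤ nx and z ≤ my for some n, m ≥ 1, then x = y. -/
/-- A commutative monoid is separative iff it cancels "two-sided small" elements:
`x + z = y + z` with `z ≤ n x` and `z ≤ m y` for some `n, m ≥ 1` implies `x = y`. -/
theorem stmt_8 {M : Type*} [AddCommMonoid M] :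
    (∀ x y : M, 2 • x = x + y → x + y = 2 • y → x = y) ↔
      (∀ x y z : M, x + z = y + z →
        (∃ n : ℕ, 1 ≤ n ∧ ALE z (n • x)) → (∃ m : ℕ, 1 ≤ m ∧ ALE z (m • y)) →
        x = y) := by
  constructor
  · intro hsep x y z hxz hx hy
    obtain ⟨n, hn, u, hu⟩ := hx
    obtain ⟨m, hm, v, hv⟩ := hy
    -- hu : n • x = z + u, hv : m • y = z + v
    have kswap : ∀ k : ℕ, k • x + z = k • y + z := by
      intro k
      induction k with
      | zero => simp
      | succ k ih =>
        calc (k+1) • x + z = (k • x + z) + x := by rw [succ_nsmul]; abel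
          _ = (k • y + z) + x := by rw [ih]
          _ = k • y + (x + z) := by abel
          _ = k • y + (y + z) := by rw [hxz]
          _ = (k+1) • y + z := by rw [succ_nsmul]; abel
    have swap : ∀ i j : ℕ, i • x + j • y + z = (i + j) • x + z := by
      intro i j
      calc i • x + j • y + z = j • y + (i • x + z) := by abel
        _ = j • y + (i • y + z) := by rw [kswap i]
        _ = (i + j) • y + z := by rw [add_nsmul]; abel
        _ = (i + j) • x + z := (kswap (i + j)).symm
    have base : n • x + m • y = (n + m) • x := by
      calc n • x + m • y = (0 • x + m • y + z) + u := by rw [hu]; simp; abel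
        _ = ((0 + m) • x + z) + u := by rw [swap]
        _ = m • x + (z + u) := by simp; abel
        _ = m • x + n • x := by rw [← hu]
        _ = (n + m) • x := by rw [← add_nsmul]; congr 1; omega
    have keyN : ∀ i j : ℕ, i + j = n + m → i • x + j • y = (n + m) • x := by
      intro i j hij
      rcases le_or_gt n i with hni | hni
      · obtain ⟨i', rfl⟩ : ∃ i', i = n + i' := ⟨i - n, by omega⟩
        calc (n + i') • x + j • y = (i' • x + j • y + z) + u := by
              rw [add_nsmul, hu]; abel
          _ = ((i' + j) • x + z) + u := by rw [swap]
          _ = (i' + j) • x + (z + u) := by abel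
          _ = (i' + j) • x + n • x := by rw [← hu]
          _ = (n + m) • x := by rw [← add_nsmul]; congr 1; omega
      · have hmj : m ≤ j := by omega
        obtain ⟨j', rfl⟩ : ∃ j', j = m + j' := ⟨j - m, by omega⟩
        calc i • x + (m + j') • y = (i • x + j' • y + z) + v := by
              rw [add_nsmul, hv]; abel
          _ = ((i + j') • x + z) + v := by rw [swap]
          _ = (i + j') • x + (z + v) := by abel
          _ = (i + j') • x + m • y := by rw [← hv]
          _ = n • x + m • y := by congr 2; omega
          _ = (n + m) • x := base
    have keyUp : ∀ t : ℕ, ∀ i j : ℕ, i + j = (n + m) + t →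
        i • x + j • y = ((n + m) + t) • x := by
      intro t
      induction t with
      | zero => intro i j hij; simpa using keyN i j (by omega)
      | succ t ih =>
        intro i j hij
        match i with
        | i + 1 =>
          calc (i + 1) • x + j • y = (i • x + j • y) + x := by rw [succ_nsmul]; abel
            _ = ((n + m) + t) • x + x := by rw [ih i j (by omega)]
            _ = ((n + m) + (t + 1)) • x := by
                have : (n + m) + (t + 1) = ((n + m) + t) + 1 := rfl
                rw [this, succ_nsmul]
        | 0 =>
          have hj : j = ((n + m) + t) + 1 := by omega
          obtain ⟨s, hs⟩ : ∃ s, (n + m) + t = s + 1 := ⟨(n + m) + t - 1, by omega⟩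
          subst hj
          calc 0 • x + (((n + m) + t) + 1) • y
              = (0 • x + ((n + m) + t) • y) + y := by rw [succ_nsmul]; abel
            _ = ((n + m) + t) • x + y := by rw [ih 0 ((n+m)+t) (by omega)]
            _ = (s • x + 1 • y) + x := by rw [hs, succ_nsmul]; simp; abel
            _ = ((n + m) + t) • x + x := by rw [ih s 1 (by omega)]
            _ = ((n + m) + (t + 1)) • x := by
                have : (n + m) + (t + 1) = ((n + m) + t) + 1 := rfl
                rw [this, succ_nsmul]
    have down : ∀ c e : ℕ, n + m ≤ e + c → ∀ i j : ℕ, i + j = e →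
        i • x + j • y = e • x := by
      intro c
      induction c with
      | zero =>
        intro e he i j hij
        obtain ⟨t, rfl⟩ : ∃ t, e = (n + m) + t := ⟨e - (n + m), by omega⟩
        exact keyUp t i j hij
      | succ c ih =>
        intro e he i j hij
        rcases le_or_gt (n + m) (e + c) with h' | h'
        · exact ih e h' i j hij
        · rcases Nat.eq_zero_or_pos e with rfl | he0
          · have hi : i = 0 := by omega
            have hj : j = 0 := by omega
            subst hi; subst hj; simp
          · have h2s : (i • x + j • y) + (i • x + j • y) = (2 * e) • x := by
              calc (i • x + j • y) + (i • x + j • y)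
                  = (2 * i) • x + (2 * j) • y := by
                    rw [two_mul, add_nsmul, two_mul, add_nsmul]; abel
                _ = (2 * e) • x := ih (2 * e) (by omega) (2 * i) (2 * j) (by omega)
            have hst : (i • x + j • y) + e • x = (2 * e) • x := by
              calc (i • x + j • y) + e • x = (i + e) • x + j • y := by
                    rw [add_nsmul]; abel
                _ = (2 * e) • x := ih (2 * e) (by omega) (i + e) j (by omega)
            have h2t : e • x + e • x = (2 * e) • x := by
              rw [← add_nsmul]; congr 1; omega
            exact hsep (i • x + j • y) (e • x)
              (by rw [two_nsmul, h2s, ← hst]) (by rw [two_nsmul, hst, h2t])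
    have final := down (n + m) 1 (by omega) 0 1 rfl
    simpa using final.symm
  · intro h x y h1 h2
    apply h x y x
    · rw [two_nsmul] at h1
      rw [h1, add_comm]
    · exact ⟨1, le_refl 1, ⟨0, by simp⟩⟩
    · exact ⟨2, by norm_num, ⟨y, h2.symm⟩⟩
end

section
/- A commutative monoid M is strongly separative (2x = x + y implies x = y) if and only if whenever x + z = y + z and z ≤ nx for some n ≥ 1, then x = y. -/
/-- A commutative monoid is strongly separative iff it cancels "one-sided small"
elements: `x + z = y + z` with `z ≤ n x` for some `n ≥ 1` implies `x = y`. -/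
theorem stmt_9 {M : Type*} [AddCommMonoid M] :
    (∀ x y : M, 2 • x = x + y → x = y) ↔
      (∀ x y z : M, x + z = y + z → (∃ n : ℕ, 1 ≤ n ∧ ALE z (n • x)) → x = y) := by
  constructor
  · intro h
    have key : ∀ (n : ℕ) (a b : M), a + n • a = b + n • a → a = b := by
      intro n
      induction n with
      | zero => intro a b hab; simpa using hab
      | succ n ih =>
        intro a b hab
        have h2 : (2 : ℕ) • ((n+1) • a) = (n+1) • a + (b + n • a) := by
          calc (2 : ℕ) • ((n+1) • a) = (a + (n+1) • a) + n • a := by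
                rw [two_nsmul, succ_nsmul]; abel
            _ = (b + (n+1) • a) + n • a := by rw [hab]
            _ = (n+1) • a + (b + n • a) := by abel
        have h3 := h _ _ h2
        rw [succ_nsmul] at h3
        exact ih a b (by rw [add_comm a, h3])
    intro x y z hxy ⟨n, _, w, hw⟩
    apply key n
    calc x + n • x = y + (z + w) := by rw [hw, ← add_assoc, hxy, add_assoc]
      _ = y + n • x := by rw [hw]
  · intro h x y hxy
    have hx : x + x = x + y := by simpa [two_nsmul] using hxy
    exact h x y x (by rw [hx, add_comm]) ⟨1, le_refl 1, 0, by simp⟩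
end

section
/- Let M be a simple conical commutative monoid. Then M is separative if and only if M is either cancellative or purely infinite. -/
section Aux

variable {M : Type*} [AddCommMonoid M]

/-- If `m•a + a = m•a + b` then `m•a` absorbs any multiple of `b` into one of `a`. -/
lemma aux_habs {m : ℕ} {a b : M} (h : m • a + a = m • a + b) :
    ∀ k : ℕ, m • a + k • b = m • a + k • a := by
  intro k
  induction k with
  | zero => simp
  | succ k ih =>
    calc m • a + (k + 1) • b = (m • a + k • b) + b := by rw [succ_nsmul]; abel
    _ = (m • a + k • a) + b := by rw [ih]
    _ = k • a + (m • a + b) := by abel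
    _ = k • a + (m • a + a) := by rw [h]
    _ = m • a + (k + 1) • a := by rw [succ_nsmul]; abel

/-- Key descent lemma: in a separative monoid, `(n+1)•a = (n+1)•b` together with
`(n+1)•a + a = (n+1)•a + b` implies `a = b`. -/
lemma aux_key (hsep : ∀ x y : M, 2 • x = x + y → x + y = 2 • y → x = y) :
    ∀ n : ℕ, ∀ a b : M, (n + 1) • a = (n + 1) • b →
      (n + 1) • a + a = (n + 1) • a + b → a = b := by
  intro n
  induction n with
  | zero =>
    intro a b h1 _
    simpa using h1
  | succ n ih =>
    intro a b h1 h2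
    -- work with m = n + 2
    have h2' : (n + 2) • b + b = (n + 2) • b + a := by
      calc (n + 2) • b + b = (n + 2) • a + b := by rw [← h1]
      _ = (n + 2) • a + a := by rw [← h2]
      _ = (n + 2) • b + a := by rw [h1]
    have habsa : ∀ k : ℕ, (n + 2) • a + k • b = (n + 2) • a + k • a := aux_habs h2
    have habsb : ∀ k : ℕ, (n + 2) • b + k • a = (n + 2) • b + k • b := aux_habs h2'
    -- Step 1 : (n+1)•a + b = (n+2)•a
    have hs : (n + 1) • a + b = (n + 2) • a := by
      apply hsep
      · -- 2•((n+1)•a + b) = ((n+1)•a + b) + (n+2)•a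
        calc 2 • ((n + 1) • a + b) = n • a + ((n + 2) • a + 2 • b) := by
              simp only [add_nsmul, one_nsmul, two_nsmul]; abel
        _ = n • a + ((n + 2) • a + 2 • a) := by rw [habsa 2]
        _ = (n + 1) • a + ((n + 2) • a + 1 • a) := by
              simp only [add_nsmul, one_nsmul, two_nsmul]; abel
        _ = (n + 1) • a + ((n + 2) • a + 1 • b) := by rw [habsa 1]
        _ = ((n + 1) • a + b) + (n + 2) • a := by rw [one_nsmul]; abel
      · -- ((n+1)•a + b) + (n+2)•a = 2•((n+2)•a)
        calc ((n + 1) • a + b) + (n + 2) • a = (n + 1) • a + ((n + 2) • a + 1 • b) := by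
              rw [one_nsmul]; abel
        _ = (n + 1) • a + ((n + 2) • a + 1 • a) := by rw [habsa 1]
        _ = 2 • ((n + 2) • a) := by
              simp only [add_nsmul, one_nsmul, two_nsmul]; abel
    -- Step 1' : (n+1)•b + a = (n+2)•b
    have hs' : (n + 1) • b + a = (n + 2) • b := by
      apply hsep
      · calc 2 • ((n + 1) • b + a) = n • b + ((n + 2) • b + 2 • a) := by
              simp only [add_nsmul, one_nsmul, two_nsmul]; abel
        _ = n • b + ((n + 2) • b + 2 • b) := by rw [habsb 2]
        _ = (n + 1) • b + ((n + 2) • b + 1 • b) := by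
              simp only [add_nsmul, one_nsmul, two_nsmul]; abel
        _ = (n + 1) • b + ((n + 2) • b + 1 • a) := by rw [habsb 1]
        _ = ((n + 1) • b + a) + (n + 2) • b := by rw [one_nsmul]; abel
      · calc ((n + 1) • b + a) + (n + 2) • b = (n + 1) • b + ((n + 2) • b + 1 • a) := by
              rw [one_nsmul]; abel
        _ = (n + 1) • b + ((n + 2) • b + 1 • b) := by rw [habsb 1]
        _ = 2 • ((n + 2) • b) := by
              simp only [add_nsmul, one_nsmul, two_nsmul]; abel
    -- Step 2 : (n+1)•a = (n+1)•b
    have hstep : (n + 1) • a = (n + 1) • b := by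
      apply hsep
      · calc 2 • ((n + 1) • a) = (n + 2) • a + n • a := by
              simp only [add_nsmul, one_nsmul, two_nsmul]; abel
        _ = (n + 2) • a + n • b := by rw [habsa n]
        _ = ((n + 1) • a + b) + n • b := by rw [hs]
        _ = (n + 1) • a + (n + 1) • b := by rw [succ_nsmul b n]; abel
      · calc (n + 1) • a + (n + 1) • b = ((n + 1) • b + a) + n • a := by
              rw [succ_nsmul a n]; abel
        _ = (n + 2) • b + n • a := by rw [hs']
        _ = (n + 2) • b + n • b := by rw [habsb n]
        _ = 2 • ((n + 1) • b) := by
              simp only [add_nsmul, one_nsmul, two_nsmul]; abel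
    have hstep2 : (n + 1) • a + a = (n + 1) • a + b := by
      rw [hs]; rw [show ((n:ℕ) + 2) • a = (n + 1) • a + a from succ_nsmul a (n+1)]
    exact ih a b hstep hstep2

/-- The separative cancellation lemma: if `a + c = b + c` with `c ≤ n•a` and `c ≤ n•b`
then `a = b`. -/
lemma aux_cancel (hconical : ∀ x y : M, x + y = 0 → x = 0 ∧ y = 0)
    (hsep : ∀ x y : M, 2 • x = x + y → x + y = 2 • y → x = y)
    {a b c : M} {n : ℕ} (h : a + c = b + c)
    (ha : ∃ x, n • a = c + x) (hb : ∃ y, n • b = c + y) : a = b := by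
  cases n with
  | zero =>
    obtain ⟨x, hx⟩ := ha
    have hc0 : c = 0 := (hconical c x (by simpa using hx.symm)).1
    simpa [hc0] using h
  | succ m =>
    obtain ⟨x, hx⟩ := ha
    obtain ⟨y, hy⟩ := hb
    have h' : c + a = c + b := by
      rw [add_comm c a, add_comm c b]; exact h
    have e1 : (m + 1) • a + a = (m + 1) • a + b := by
      rw [hx]
      calc c + x + a = (c + a) + x := by abel
      _ = (c + b) + x := by rw [h']
      _ = c + x + b := by abel
    have e1' : (m + 1) • b + b = (m + 1) • b + a := by
      rw [hy]
      calc c + y + b = (c + b) + y := by abel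
      _ = (c + a) + y := by rw [← h']
      _ = c + y + a := by abel
    have hmul : (m + 1) • a = (m + 1) • b := by
      apply hsep
      · rw [two_nsmul]; exact (aux_habs e1 (m + 1)).symm
      · rw [two_nsmul, add_comm ((m+1) • a)]; exact aux_habs e1' (m + 1)
    exact aux_key hsep m a b hmul e1

end Aux

/-- A simple conical commutative monoid is separative iff it is either
cancellative or purely infinite. -/
theorem stmt_10 {M : Type*} [AddCommMonoid M]
    (hconical : ∀ x y : M, x + y = 0 → x = 0 ∧ y = 0)
    (hsimple : ∀ a c : M, a ≠ 0 → c ≠ 0 → ∃ n : ℕ, 1 ≤ n ∧ ALE a (n • c)) :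
    (∀ x y : M, 2 • x = x + y → x + y = 2 • y → x = y) ↔
      ((∀ x y z : M, x + z = y + z → x = y) ∨ (∀ a : M, ALE (2 • a) a)) := by
  constructor
  · intro hsep
    by_cases hP : ∃ z t : M, t ≠ 0 ∧ z = z + t
    · right
      obtain ⟨z, t, ht, hz⟩ := hP
      have hz0 : z ≠ 0 := by
        intro h
        rw [h] at hz
        exact ht (by simpa using hz.symm)
      have hzt : ∀ k : ℕ, z = z + k • t := by
        intro k
        induction k with
        | zero => simp
        | succ k ih =>
          calc z = z + t := hz
          _ = (z + k • t) + t := by rw [← ih]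
          _ = z + (k + 1) • t := by rw [succ_nsmul]; abel
      intro a
      by_cases ha : a = 0
      · exact ⟨0, by simp [ha]⟩
      · obtain ⟨k, hk1, r, hr⟩ := hsimple a t ha ht
        have h1 : z = z + (a + r) := by
          calc z = z + k • t := hzt k
          _ = z + (a + r) := by rw [hr]
        have hz2 : a + z = (2 • a + r) + z := by
          calc a + z = a + (z + (a + r)) := by rw [← h1]
          _ = (2 • a + r) + z := by simp only [two_nsmul]; abel
        obtain ⟨m, hm1, x, hxm⟩ := hsimple z a hz0 ha
        have hb : ∃ y, m • (2 • a + r) = z + y := by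
          refine ⟨x + (m • a + m • r), ?_⟩
          calc m • (2 • a + r) = m • a + m • a + m • r := by
                rw [smul_add, two_nsmul, smul_add]
          _ = (z + x) + m • a + m • r := by rw [← hxm]
          _ = z + (x + (m • a + m • r)) := by abel
        have := aux_cancel hconical hsep hz2 ⟨x, hxm⟩ hb
        exact ⟨r, this⟩
    · left
      push_neg at hP
      intro x y w hxy
      by_cases hw : w = 0
      · simpa [hw] using hxy
      by_cases hx : x = 0
      · rw [hx, zero_add] at hxy
        have hy0 : y = 0 := by
          by_contra hy
          exact hP w y hy (by rw [add_comm] at hxy; exact hxy)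
        rw [hx, hy0]
      by_cases hy : y = 0
      · rw [hy, zero_add] at hxy
        have hx0 : x = 0 := by
          by_contra hxne
          exact hP w x hxne (by rw [add_comm] at hxy; exact hxy.symm)
        rw [hy, hx0]
      · obtain ⟨m, hm, u, hu⟩ := hsimple w x hw hx
        obtain ⟨k, hk, v, hv⟩ := hsimple w y hw hy
        refine aux_cancel hconical hsep (n := m + k) hxy ⟨u + k • x, ?_⟩ ⟨m • y + v, ?_⟩
        · rw [add_nsmul, hu]; abel
        · rw [add_nsmul, hv]; abel
  · intro h x y h1 h2
    rcases h with hc | hpi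
    · apply hc x y x
      rw [two_nsmul] at h1
      rw [h1]; exact add_comm x y
    · obtain ⟨u, hu⟩ := hpi x
      obtain ⟨v, hv⟩ := hpi y
      rw [h1] at hu   -- hu : x = (x + y) + u
      rw [← h2] at hv -- hv : y = (x + y) + v
      have e2 : y = x + y + v := hv
      have e3 : y = y + (y + u) := by
        calc y = x + y + v := e2
        _ = (x + y + u) + y + v := by rw [← hu]
        _ = (x + y + v) + (y + u) := by abel
        _ = y + (y + u) := by rw [← e2]
      have e4 : y = x := by
        calc y = y + (y + u) := e3
        _ = 2 • y + u := by rw [two_nsmul]; abel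
        _ = (x + y) + u := by rw [← h2]
        _ = x := hu.symm
      exact e4.symm
end

section
/- Every strongly separative simple conical commutative monoid is cancellative. -/
/-- n-th root property from strong separativity. -/
lemma ss_root {M : Type*} [AddCommMonoid M]
    (hss : ∀ x y : M, 2 • x = x + y → x = y) :
    ∀ (n : ℕ) (a b : M), (n + 2) • a = (n + 1) • a + b → a = b := by
  intro n
  induction n with
  | zero =>
    intro a b h
    apply hss
    simpa [one_nsmul] using h
  | succ k ih =>
    intro a b h
    apply ih
    apply hss
    have e1 : (k + 2) * 2 = (k + 1) + (k + 3) := by omega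
    calc 2 • ((k + 2) • a) = ((k + 2) * 2) • a := (mul_nsmul a (k + 2) 2).symm
      _ = ((k + 1) + (k + 3)) • a := by rw [e1]
      _ = (k + 1) • a + (k + 3) • a := add_nsmul a (k + 1) (k + 3)
      _ = (k + 1) • a + ((k + 2) • a + b) := by rw [h]
      _ = (k + 2) • a + ((k + 1) • a + b) := by abel

/-- Cancellation when the cancelled element lies below. -/
lemma ss_canc_le {M : Type*} [AddCommMonoid M]
    (hss : ∀ x y : M, 2 • x = x + y → x = y) (a b c : M)
    (h : a + c = b + c) (hle : ∃ t, a = c + t) : a = b := by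
  obtain ⟨t, ht⟩ := hle
  apply hss
  calc 2 • a = a + a := two_nsmul a
    _ = a + (c + t) := by rw [← ht]
    _ = (a + c) + t := by rw [add_assoc]
    _ = (b + c) + t := by rw [h]
    _ = b + (c + t) := by rw [add_assoc]
    _ = b + a := by rw [← ht]
    _ = a + b := add_comm b a

/-- Cancellation when the cancelled element lies below a multiple. -/
lemma ss_canc_n {M : Type*} [AddCommMonoid M]
    (hss : ∀ x y : M, 2 • x = x + y → x = y) (a b c : M) (n : ℕ) (hn : 1 ≤ n)
    (hle : ∃ t, n • a = c + t) (h : a + c = b + c) : a = b := by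
  obtain ⟨m, rfl⟩ := Nat.exists_eq_add_of_le hn
  have key : (1 + m) • a = m • a + b := by
    apply ss_canc_le hss _ _ c _ hle
    calc (1 + m) • a + c = (a + m • a) + c := by
          rw [add_nsmul, one_nsmul]
      _ = m • a + (a + c) := by abel
      _ = m • a + (b + c) := by rw [h]
      _ = (m • a + b) + c := by abel
  match m, key with
  | 0, key => simpa [one_nsmul, zero_nsmul] using key
  | (k + 1), key =>
    apply ss_root hss k a b
    have e : k + 2 = 1 + (k + 1) := by omega
    rw [e, key]

/-- Every strongly separative simple conical commutative monoid is cancellative. -/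
theorem stmt_11 {M : Type*} [AddCommMonoid M]
    (hconical : ∀ x y : M, x + y = 0 → x = 0 ∧ y = 0)
    (hsimple : ∀ a c : M, a ≠ 0 → c ≠ 0 → ∃ n : ℕ, 1 ≤ n ∧ ALE a (n • c))
    (hss : ∀ x y : M, 2 • x = x + y → x = y) :
    ∀ x y z : M, x + z = y + z → x = y := by
  intro x y z h
  by_cases hz : z = 0
  · simpa [hz] using h
  by_cases hx : x = 0
  · by_cases hy : y = 0
    · rw [hx, hy]
    · obtain ⟨n, hn, t, ht⟩ := hsimple z y hz hy
      exact (ss_canc_n hss y x z n hn ⟨t, ht⟩ h.symm).symm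
  · obtain ⟨n, hn, t, ht⟩ := hsimple z x hz hx
    exact ss_canc_n hss x y z n hn ⟨t, ht⟩ h
end

section
/- Let a group G act by automorphisms on a row-finite directed graph E, let Ω be a complete set of representatives of the G-orbits on E⁰, and let E_G be the graph with vertex set E⁰/G, edge set the disjoint union of r⁻¹(v) over v ∈ Ω, range r_G(e) = [r(e)] and source s_G(e) = [s(e)]. Then the monoid of coinvariants M(E)_G is isomorphic to the graph monoid M(E_G). -/
/-- The defining congruence of the graph monoid `M(E)` of a directed graph. -/
noncomputable def graphCon (V E : Type*) (r s : E → V) : AddCon (V →₀ ℕ) :=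
  addConGen fun x y => ∃ v : V, (∃ e, r e = v) ∧
    x = Finsupp.single v 1 ∧
    y = ∑ᶠ e ∈ {e : E | r e = v}, Finsupp.single (s e) 1

/-- The defining congruence of the monoid of coinvariants `M(E)_G`: the graph
monoid relations together with the identifications `a_v = a_{g • v}`. -/
noncomputable def coinvCon (G : Type*) (V E : Type*) [Group G] [MulAction G V] (r s : E → V) :
    AddCon (V →₀ ℕ) :=
  addConGen fun x y =>
    (∃ v : V, (∃ e, r e = v) ∧
      x = Finsupp.single v 1 ∧
      y = ∑ᶠ e ∈ {e : E | r e = v}, Finsupp.single (s e) 1) ∨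
    (∃ (g : G) (v : V), x = Finsupp.single v 1 ∧ y = Finsupp.single (g • v) 1)

/-! The map `a_v ↦ a_[v]` respects the relations of `M(E)_G`: the identifications `a_v = a_{gv}`
trivially, and the graph relation at `v` because translation by any `g` with `gv ∈ Ω` carries
`r⁻¹(v)` onto `r⁻¹(gv)`, the fibre of `r_G` over `[v]`, without changing the orbits of sources.
Conversely `a_[v] ↦ a_ω`, with `ω ∈ Ω` the representative of `[v]`, respects the relations of
`M(E_G)`, because in `M(E)_G` every `a_w` equals `a_ω` for the representative `ω` of `[w]`; the
same fact shows that the two maps are mutually inverse. -/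

open Finsupp MulAction

theorem Finsupp.mapDomain_finsum_mem_single {α β ι M : Type*} [AddCommMonoid M] {S : Set ι}
    (hS : S.Finite) (f : α → β) (t : ι → α) (m : M) :
    mapDomain f (∑ᶠ i ∈ S, single (t i) m) = ∑ᶠ i ∈ S, single (f (t i)) m := by
  rw [← mapDomain.addMonoidHom_apply, (mapDomain.addMonoidHom f).map_finsum_mem _ hS]
  simp only [mapDomain.addMonoidHom_apply, mapDomain_single]

section OrbitRepresentatives

variable {G V : Type*} [Group G] [MulAction G V] {Ω : Set V}
  (hΩ : ∀ v : V, ∃! w : V, w ∈ Ω ∧ w ∈ orbit G v)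

noncomputable def orbitRep (c : Quotient (orbitRel G V)) : V :=
  (hΩ c.out).choose

theorem orbitRep_mem (c : Quotient (orbitRel G V)) : orbitRep hΩ c ∈ Ω :=
  (hΩ c.out).choose_spec.1.1

theorem mk_orbitRep (c : Quotient (orbitRel G V)) : Quotient.mk _ (orbitRep hΩ c) = c :=
  (Quotient.sound (orbitRel_apply.mpr (hΩ c.out).choose_spec.1.2)).trans c.out_eq

theorem mk_smul_eq_mk (g : G) (v : V) :
    Quotient.mk (orbitRel G V) (g • v) = Quotient.mk (orbitRel G V) v :=
  Quotient.sound (orbitRel_apply.mpr (mem_orbit v g))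

theorem orbitRep_mk_mem_orbit (v : V) : orbitRep hΩ (Quotient.mk _ v) ∈ orbit G v :=
  orbitRel_apply.mp (Quotient.exact (mk_orbitRep hΩ _))

theorem eq_orbitRep_of_mem {w : V} {c : Quotient (orbitRel G V)} (hw : w ∈ Ω)
    (hc : Quotient.mk _ w = c) : w = orbitRep hΩ c :=
  (hΩ c.out).choose_spec.2 w ⟨hw, orbitRel_apply.mp (Quotient.exact (hc.trans c.out_eq.symm))⟩

end OrbitRepresentatives

section QuotientGraph

variable {G V E : Type*} [Group G] [MulAction G V]

noncomputable abbrev quotientGraphCon (G : Type*) [Group G] [MulAction G V] (r s : E → V)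
    (Ω : Set V) : AddCon (Quotient (orbitRel G V) →₀ ℕ) :=
  graphCon (Quotient (orbitRel G V)) {e : E // r e ∈ Ω}
    (fun e => Quotient.mk (orbitRel G V) (r e.1)) (fun e => Quotient.mk (orbitRel G V) (s e.1))

theorem coinvCon_single_smul (r s : E → V) (g : G) (v : V) :
    coinvCon G V E r s (single v 1) (single (g • v) 1) :=
  AddConGen.Rel.of _ _ (Or.inr ⟨g, v, rfl, rfl⟩)

theorem coinvCon_single_finsum (r s : E → V) (e₀ : E) :
    coinvCon G V E r s (single (r e₀) 1) (∑ᶠ e ∈ {e | r e = r e₀}, single (s e) 1) :=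
  AddConGen.Rel.of _ _ (Or.inl ⟨r e₀, ⟨e₀, rfl⟩, rfl, rfl⟩)

theorem coinvCon_mapDomain (r s : E → V) {f : V → V} (hf : ∀ v, f v ∈ orbit G v)
    (x : V →₀ ℕ) : coinvCon G V E r s (mapDomain f x) x := by
  induction x using Finsupp.induction with
  | zero => simpa using (coinvCon G V E r s).refl 0
  | single_add v n x _ _ ih =>
    rw [mapDomain_add, mapDomain_single]
    refine (coinvCon G V E r s).add ?_ ih
    obtain ⟨g, hg⟩ := hf v
    rw [← hg]
    simpa only [smul_single, smul_eq_mul, mul_one] using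
      (coinvCon G V E r s).nsmul n (coinvCon_single_smul r s g v).symm

theorem finsum_mem_fiber_eq_of_mem_orbit [MulAction G E] {M : Type*} [AddCommMonoid M]
    {r : E → V} (hr : ∀ (g : G) (e : E), g • r e = r (g • e)) {f : E → M}
    (hf : ∀ (g : G) (e : E), f (g • e) = f e) {v w : V} (hw : w ∈ orbit G v) :
    ∑ᶠ e ∈ {e | r e = w}, f e = ∑ᶠ e ∈ {e | r e = v}, f e := by
  obtain ⟨g, rfl⟩ := hw
  refine (finsum_mem_eq_of_bijOn (g • ·) ⟨?_, (MulAction.injective g).injOn, ?_⟩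
    fun e _ => (hf g e).symm).symm
  · intro e (he : r e = v)
    show r (g • e) = g • v
    rw [← hr, he]
  · intro e (he : r e = g • v)
    refine ⟨g⁻¹ • e, ?_, smul_inv_smul g e⟩
    show r (g⁻¹ • e) = v
    rw [← hr, he, inv_smul_smul]

theorem finsum_mem_quotientGraph_fiber {M : Type*} [AddCommMonoid M] {Ω : Set V}
    (hΩ : ∀ v : V, ∃! w : V, w ∈ Ω ∧ w ∈ orbit G v) (r : E → V) (c : Quotient (orbitRel G V))
    (f : E → M) :
    ∑ᶠ e ∈ {e : {e : E // r e ∈ Ω} | Quotient.mk _ (r e.1) = c}, f e.1 =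
      ∑ᶠ e ∈ {e | r e = orbitRep hΩ c}, f e := by
  refine finsum_mem_eq_of_bijOn Subtype.val ⟨?_, Subtype.val_injective.injOn, ?_⟩ fun _ _ => rfl
  · rintro ⟨e, he⟩ (hc : Quotient.mk _ (r e) = c)
    exact eq_orbitRep_of_mem hΩ he hc
  · intro e (he : r e = orbitRep hΩ c)
    refine ⟨⟨e, he ▸ orbitRep_mem hΩ c⟩, ?_, rfl⟩
    show Quotient.mk _ (r e) = c
    rw [he, mk_orbitRep]

variable {r s : E → V} {Ω : Set V}

theorem quotientGraphCon_le_ker_mapDomain_orbitRep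
    (hΩ : ∀ v : V, ∃! w : V, w ∈ Ω ∧ w ∈ orbit G v) (hrow : ∀ v : V, {e : E | r e = v}.Finite) :
    quotientGraphCon G r s Ω ≤ AddCon.ker ((coinvCon G V E r s).mk'.comp
      (mapDomain.addMonoidHom (orbitRep hΩ))) := by
  refine AddCon.addConGen_le.mpr fun x y hxy => (AddCon.ker_rel _).mpr ?_
  obtain ⟨c, ⟨e₀, rfl⟩, rfl, rfl⟩ := hxy
  have he₀ : r e₀.1 = orbitRep hΩ (Quotient.mk _ (r e₀.1)) := eq_orbitRep_of_mem hΩ e₀.2 rfl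
  simp only [AddMonoidHom.comp_apply, mapDomain.addMonoidHom_apply, mapDomain_single,
    AddCon.coe_mk']
  rw [finsum_mem_quotientGraph_fiber hΩ r _ (fun e => single (Quotient.mk _ (s e)) 1),
    ← mapDomain_finsum_mem_single (hrow _), ← mapDomain_comp, ← he₀]
  exact (AddCon.eq _).mpr ((coinvCon_single_finsum r s e₀.1).trans
    (coinvCon_mapDomain r s (orbitRep_mk_mem_orbit hΩ) _).symm)

variable [MulAction G E]

theorem mapDomain_mk_finsum_fiber (hΩ : ∀ v : V, ∃! w : V, w ∈ Ω ∧ w ∈ orbit G v)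
    (hrow : ∀ v : V, {e : E | r e = v}.Finite)
    (hs : ∀ (g : G) (e : E), g • s e = s (g • e)) (hr : ∀ (g : G) (e : E), g • r e = r (g • e))
    (v : V) :
    mapDomain (Quotient.mk (orbitRel G V)) (∑ᶠ e ∈ {e | r e = v}, single (s e) 1) =
      ∑ᶠ e ∈ {e : {e : E // r e ∈ Ω} |
          Quotient.mk (orbitRel G V) (r e.1) = Quotient.mk (orbitRel G V) v},
        single (Quotient.mk (orbitRel G V) (s e.1)) 1 := by
  have hinv (g : G) (e : E) :
      single (Quotient.mk (orbitRel G V) (s (g • e))) 1 =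
        single (Quotient.mk (orbitRel G V) (s e)) 1 := by
    rw [← hs, mk_smul_eq_mk]
  rw [mapDomain_finsum_mem_single (hrow v), finsum_mem_quotientGraph_fiber hΩ r _
    (fun e => single (Quotient.mk (orbitRel G V) (s e)) 1),
    finsum_mem_fiber_eq_of_mem_orbit hr hinv (orbitRep_mk_mem_orbit hΩ v)]

theorem coinvCon_le_ker_mapDomain_mk (hΩ : ∀ v : V, ∃! w : V, w ∈ Ω ∧ w ∈ orbit G v)
    (hrow : ∀ v : V, {e : E | r e = v}.Finite) (hs : ∀ (g : G) (e : E), g • s e = s (g • e))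
    (hr : ∀ (g : G) (e : E), g • r e = r (g • e)) :
    coinvCon G V E r s ≤ AddCon.ker ((quotientGraphCon G r s Ω).mk'.comp
      (mapDomain.addMonoidHom (Quotient.mk (orbitRel G V)))) := by
  refine AddCon.addConGen_le.mpr fun x y hxy => (AddCon.ker_rel _).mpr ?_
  rcases hxy with ⟨v, ⟨e₀, rfl⟩, rfl, rfl⟩ | ⟨g, v, rfl, rfl⟩
  · simp only [AddMonoidHom.comp_apply, mapDomain.addMonoidHom_apply, mapDomain_single,
      mapDomain_mk_finsum_fiber hΩ hrow hs hr, AddCon.coe_mk']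
    obtain ⟨g, hg⟩ := orbitRep_mk_mem_orbit hΩ (r e₀)
    have he : r (g • e₀) = orbitRep hΩ (Quotient.mk _ (r e₀)) := by rw [← hr, ← hg]
    refine (AddCon.eq _).mpr (AddConGen.Rel.of _ _ ⟨_, ⟨⟨g • e₀, he ▸ orbitRep_mem hΩ _⟩, ?_⟩,
      rfl, rfl⟩)
    simp only [he, mk_orbitRep]
  · simp only [AddMonoidHom.comp_apply, mapDomain.addMonoidHom_apply, mapDomain_single,
      mk_smul_eq_mk]

noncomputable def coinvQuotientEquivQuotientGraph
    (hΩ : ∀ v : V, ∃! w : V, w ∈ Ω ∧ w ∈ orbit G v)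
    (hrow : ∀ v : V, {e : E | r e = v}.Finite) (hs : ∀ (g : G) (e : E), g • s e = s (g • e))
    (hr : ∀ (g : G) (e : E), g • r e = r (g • e)) :
    (coinvCon G V E r s).Quotient ≃+ (quotientGraphCon G r s Ω).Quotient :=
  AddMonoidHom.toAddEquiv
    ((coinvCon G V E r s).lift _ (coinvCon_le_ker_mapDomain_mk hΩ hrow hs hr))
    ((quotientGraphCon G r s Ω).lift _ (quotientGraphCon_le_ker_mapDomain_orbitRep hΩ hrow))
    (AddCon.lift_funext _ _ fun x => by
      simp only [AddMonoidHom.comp_apply, AddCon.lift_coe, mapDomain.addMonoidHom_apply,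
        AddCon.coe_mk', ← mapDomain_comp, AddMonoidHom.id_apply]
      exact (AddCon.eq _).mpr (coinvCon_mapDomain r s (orbitRep_mk_mem_orbit hΩ) x))
    (AddCon.lift_funext _ _ fun y => by
      simp only [AddMonoidHom.comp_apply, AddCon.lift_coe, mapDomain.addMonoidHom_apply,
        AddCon.coe_mk', ← mapDomain_comp, AddMonoidHom.id_apply]
      rw [show Quotient.mk _ ∘ orbitRep hΩ = id from funext (mk_orbitRep hΩ), mapDomain_id])

theorem coinvQuotientEquivQuotientGraph_mk_single
    (hΩ : ∀ v : V, ∃! w : V, w ∈ Ω ∧ w ∈ orbit G v)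
    (hrow : ∀ v : V, {e : E | r e = v}.Finite) (hs : ∀ (g : G) (e : E), g • s e = s (g • e))
    (hr : ∀ (g : G) (e : E), g • r e = r (g • e)) (v : V) :
    coinvQuotientEquivQuotientGraph hΩ hrow hs hr ((coinvCon G V E r s).mk' (single v 1)) =
      (quotientGraphCon G r s Ω).mk' (single (Quotient.mk _ v) 1) := by
  simp only [coinvQuotientEquivQuotientGraph, AddMonoidHom.toAddEquiv_apply, AddCon.lift_mk',
    AddMonoidHom.comp_apply, mapDomain.addMonoidHom_apply, mapDomain_single]

end QuotientGraph

/-- If a group `G` acts by automorphisms on a row-finite directed graph `E`, `Ω`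
is a complete set of representatives of the `G`-orbits on vertices, and `E_G` is
the quotient graph (vertices `E⁰/G`, edges `⋃_{v ∈ Ω} r⁻¹(v)`, with the induced
range and source maps), then the monoid of coinvariants `M(E)_G` is isomorphic to
the graph monoid `M(E_G)`, via `[a_v] ↦ a_{[v]}`. -/
theorem stmt_15 {G V E : Type*} [Group G] [MulAction G V] [MulAction G E]
    (r s : E → V)
    (hrow : ∀ v : V, {e : E | r e = v}.Finite)
    (hs : ∀ (g : G) (e : E), g • s e = s (g • e))
    (hr : ∀ (g : G) (e : E), g • r e = r (g • e))
    (Ω : Set V)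
    (hΩ : ∀ v : V, ∃! w : V, w ∈ Ω ∧ w ∈ MulAction.orbit G v) :
    ∃ φ : (coinvCon G V E r s).Quotient ≃+
        (graphCon (Quotient (MulAction.orbitRel G V)) {e : E // r e ∈ Ω}
          (fun e => Quotient.mk (MulAction.orbitRel G V) (r e.1))
          (fun e => Quotient.mk (MulAction.orbitRel G V) (s e.1))).Quotient,
      ∀ v : V,
        φ ((coinvCon G V E r s).mk' (Finsupp.single v 1)) =
          (graphCon (Quotient (MulAction.orbitRel G V)) {e : E // r e ∈ Ω}
            (fun e => Quotient.mk (MulAction.orbitRel G V) (r e.1))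
            (fun e => Quotient.mk (MulAction.orbitRel G V) (s e.1))).mk'
            (Finsupp.single (Quotient.mk (MulAction.orbitRel G V) v) 1) :=
  ⟨coinvQuotientEquivQuotientGraph hΩ hrow hs hr,
    coinvQuotientEquivQuotientGraph_mk_single hΩ hrow hs hr⟩
end

section
/- Let M₂ be the commutative monoid generated by the four words {00, 01, 10, 11} of length 2 over {0,1}, with defining relations a0 + a1 = 0a + 1a for each a ∈ {0,1} (that is, 00 + 01 = 00 + 10 and 10 + 11 = 01 + 11). Then M₂ is not cancellative: 00 + 01 = 00 + 10 but 01 ≠ 10 in M₂. -/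
/-- The defining congruence of the monoid `M₂`: the free commutative monoid on the
four words of length 2 over `{0,1}` (a word `ab` is the pair `(a, b)` of Booleans,
`0 = false`, `1 = true`), modulo `00 + 01 = 00 + 10` and `10 + 11 = 01 + 11`. -/
noncomputable def M2con : AddCon ((Bool × Bool) →₀ ℕ) :=
  addConGen fun x y =>
    (x = Finsupp.single (false, false) 1 + Finsupp.single (false, true) 1 ∧
      y = Finsupp.single (false, false) 1 + Finsupp.single (true, false) 1) ∨
    (x = Finsupp.single (true, false) 1 + Finsupp.single (true, true) 1 ∧
      y = Finsupp.single (false, true) 1 + Finsupp.single (true, true) 1)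

/-!
The relation `00 + 01 = 00 + 10` is one of the defining relations. To see that `01 ≠ 10`,
map `M₂` to `WithTop ℕ` by `00, 11 ↦ ⊤`, `01 ↦ 0`, `10 ↦ 1`: since `⊤` is absorbing, both
defining relations hold there, while the images of `01` and `10` differ.
-/

open Finsupp

namespace M2con

section lift

variable {N : Type*} [AddCommMonoid N] (v : Bool × Bool → N)

theorem le_ker_liftAddHom
    (h₁ : v (false, false) + v (false, true) = v (false, false) + v (true, false))
    (h₂ : v (true, false) + v (true, true) = v (false, true) + v (true, true)) :
    M2con ≤ AddCon.ker (liftAddHom fun w => multiplesHom N (v w)) :=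
  AddCon.addConGen_le.mpr <| by
    rintro x y (⟨rfl, rfl⟩ | ⟨rfl, rfl⟩) <;>
      simpa [AddCon.ker_rel, liftAddHom_apply_single]

noncomputable def liftOfValues
    (h₁ : v (false, false) + v (false, true) = v (false, false) + v (true, false))
    (h₂ : v (true, false) + v (true, true) = v (false, true) + v (true, true)) :
    M2con.Quotient →+ N :=
  M2con.lift _ (le_ker_liftAddHom v h₁ h₂)

theorem liftOfValues_mk'_single
    (h₁ : v (false, false) + v (false, true) = v (false, false) + v (true, false))
    (h₂ : v (true, false) + v (true, true) = v (false, true) + v (true, true))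
    (w : Bool × Bool) :
    liftOfValues v h₁ h₂ (M2con.mk' (single w 1)) = v w := by
  rw [liftOfValues, AddCon.lift_mk', liftAddHom_apply_single, multiplesHom_apply, one_nsmul]

end lift

theorem mk'_00_add_01_eq_00_add_10 :
    M2con.mk' (single (false, false) 1) + M2con.mk' (single (false, true) 1) =
      M2con.mk' (single (false, false) 1) + M2con.mk' (single (true, false) 1) := by
  rw [← map_add, ← map_add]
  exact M2con.eq.mpr (AddConGen.Rel.of _ _ (Or.inl ⟨rfl, rfl⟩))

def separatingValue : Bool × Bool → WithTop ℕ
  | (false, true) => 0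
  | (true, false) => 1
  | _ => ⊤

theorem mk'_01_ne_10 :
    M2con.mk' (single (false, true) 1) ≠ M2con.mk' (single (true, false) 1) := by
  intro h
  have := congrArg (liftOfValues separatingValue rfl rfl) h
  rw [liftOfValues_mk'_single separatingValue rfl rfl (false, true),
    liftOfValues_mk'_single separatingValue rfl rfl (true, false)] at this
  exact zero_ne_one this

end M2con

/-- `M₂` is not cancellative: `00 + 01 = 00 + 10` in `M₂` but `01 ≠ 10`. -/
theorem stmt_17 :
    (M2con.mk' (Finsupp.single (false, false) 1) + M2con.mk' (Finsupp.single (false, true) 1) =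
      M2con.mk' (Finsupp.single (false, false) 1) + M2con.mk' (Finsupp.single (true, false) 1)) ∧
    M2con.mk' (Finsupp.single (false, true) 1) ≠ M2con.mk' (Finsupp.single (true, false) 1) ∧
    ¬ (∀ x y z : M2con.Quotient, x + z = y + z → x = y) := by
  refine ⟨M2con.mk'_00_add_01_eq_00_add_10, M2con.mk'_01_ne_10, fun cancel => ?_⟩
  refine M2con.mk'_01_ne_10 (cancel _ _ (M2con.mk' (single (false, false) 1)) ?_)
  simpa only [add_comm] using M2con.mk'_00_add_01_eq_00_add_10
end
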